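/- There exist a countable group Γ and an action of Γ by surjective affine isometries on the real Hilbert space ℓ²(ℕ, ℝ), such that every orbit of the action is dense in ℓ²(ℕ, ℝ), and every finitely generated subgroup of Γ has a fixed point (for each finitely generated subgroup H ≤ Γ there is v ∈ ℓ²(ℕ, ℝ) with α(h)v = v for all h ∈ H). In particular, the action almost has fixed points: for every ε > 0 and every finite subset F of Γ there exists v with ‖α(g)v − v‖ ≤ ε for all g ∈ F. -/

import Mathlib

/-- `Γ` (a countable group) admits an action by surjective affine isometries on `ℓ²(ℕ, ℝ)`
with all orbits dense, such that every finitely generated subgroup has a fixed point; in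
particular the action almost has fixed points. -/
def HasMinimalActionWithAlmostFixedPoints (Γ : Type) [Group Γ] : Prop :=
  Countable Γ ∧
  ∃ α : Γ → (lp (fun _ : ℕ => ℝ) 2 ≃ᵃⁱ[ℝ] lp (fun _ : ℕ => ℝ) 2),
    (∀ g h : Γ, ∀ x : lp (fun _ : ℕ => ℝ) 2, α (g * h) x = α g (α h x)) ∧
    (∀ x₀ : lp (fun _ : ℕ => ℝ) 2, Dense (Set.range fun g => α g x₀)) ∧
    (∀ S : Subgroup Γ, (∃ F : Finset Γ, Subgroup.closure (F : Set Γ) = S) →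
      ∃ v : lp (fun _ : ℕ => ℝ) 2, ∀ h ∈ S, α h v = v) ∧
    (∀ ε : ℝ, 0 < ε → ∀ F : Finset Γ,
      ∃ v : lp (fun _ : ℕ => ℝ) 2, ∀ g ∈ F, ‖α g v - v‖ ≤ ε)

noncomputable section
open scoped RealInnerProductSpace

abbrev E : Type := lp (fun _ : ℕ => ℝ) 2
def ee (i : ℕ) : E := lp.single 2 i 1
lemma inner_ee_right (x : E) (i : ℕ) : ⟪x, ee i⟫ = x i := by
  rw [ee, lp.inner_single_right]; simp [RCLike.inner_apply]
lemma inner_ee_ee (i j : ℕ) : ⟪ee i, ee j⟫ = if i = j then 1 else 0 := by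
  rw [inner_ee_right, ee, lp.single_apply]
  split_ifs with h h' h' <;> simp_all
lemma norm_ee (i : ℕ) : ‖ee i‖ = 1 := by
  have := lp.norm_single (p := 2) (E := fun _ : ℕ => ℝ) (by norm_num) i (1:ℝ)
  simpa [ee] using this

def toE (w : ℕ →₀ ℚ) : E := ∑ i ∈ w.support, (w i : ℝ) • ee i

lemma toE_eq_sum (w : ℕ →₀ ℚ) {s : Finset ℕ} (hs : w.support ⊆ s) :
    toE w = ∑ i ∈ s, (w i : ℝ) • ee i :=
  Finset.sum_subset hs (fun i _ hi => by
    simp [Finsupp.notMem_support_iff.mp hi])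

lemma inner_toE_ee (w : ℕ →₀ ℚ) (t : ℕ) : ⟪toE w, ee t⟫ = (w t : ℝ) := by
  rw [toE, sum_inner]
  simp only [real_inner_smul_left, inner_ee_ee, mul_ite, mul_one, mul_zero]
  rw [Finset.sum_ite_eq' w.support t (fun i => (w i : ℝ))]
  by_cases h : t ∈ w.support
  · simp [h]
  · simp [h, Finsupp.notMem_support_iff.mp h]

lemma toE_ne_zero {w : ℕ →₀ ℚ} (hw : w ≠ 0) : toE w ≠ 0 := by
  obtain ⟨t, ht⟩ : ∃ t, w t ≠ 0 := by
    by_contra h; push_neg at h; exact hw (Finsupp.ext h)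
  intro h0
  have := inner_toE_ee w t
  rw [h0, inner_zero_left] at this
  exact ht (by exact_mod_cast this.symm)

lemma single_eq_smul (x : E) (i : ℕ) : lp.single 2 i (x i) = (x i) • ee i := by
  rw [ee, ← lp.single_smul]
  norm_num

lemma dens_toE (x : E) (δ : ℝ) (hδ : 0 < δ) : ∃ w : ℕ →₀ ℚ, ‖toE w - x‖ < δ := by
  have hs : HasSum (fun i : ℕ => lp.single 2 i (x i)) x :=
    lp.hasSum_single (by norm_num) x
  have h2 : ∀ᶠ s : Finset ℕ in Filter.atTop,
      dist (∑ i ∈ s, lp.single 2 i (x i)) x < δ / 2 :=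
    Metric.tendsto_nhds.mp hs (δ / 2) (by positivity)
  obtain ⟨s, hs2⟩ := h2.exists
  set c : ℝ := δ / (2 * (s.card + 1)) with hc
  have hcpos : 0 < c := by positivity
  have hq : ∀ i : ℕ, ∃ qq : ℚ, |x i - (qq : ℝ)| < c := fun i => exists_rat_near _ hcpos
  choose qf hqf using hq
  refine ⟨∑ i ∈ s, Finsupp.single i (qf i), ?_⟩
  set w : ℕ →₀ ℚ := ∑ i ∈ s, Finsupp.single i (qf i) with hw
  have hsupp : w.support ⊆ s := by
    refine (Finsupp.support_finset_sum).trans ?_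
    intro j hj
    simp only [Finset.mem_biUnion] at hj
    obtain ⟨i, hi, hji⟩ := hj
    have := Finsupp.support_single_subset hji
    simp only [Finset.mem_singleton] at this
    rwa [this]
  have hwval : ∀ j ∈ s, w j = qf j := by
    intro j hj
    rw [hw, Finsupp.finset_sum_apply]
    simp only [Finsupp.single_apply]
    rw [Finset.sum_ite_eq' s j (fun i => qf i), if_pos hj]
  have key : ‖toE w - ∑ i ∈ s, lp.single 2 i (x i)‖ ≤ s.card * c := by
    rw [toE_eq_sum w hsupp, ← Finset.sum_sub_distrib]
    refine (norm_sum_le _ _).trans ?_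
    have : ∀ i ∈ s, ‖(w i : ℝ) • ee i - lp.single 2 i (x i)‖ ≤ c := by
      intro i hi
      rw [single_eq_smul, ← sub_smul, norm_smul, norm_ee, mul_one]
      rw [hwval i hi]
      rw [Real.norm_eq_abs, show ((qf i : ℝ) - x i) = -(x i - qf i) by ring, abs_neg]
      exact (hqf i).le
    calc ∑ i ∈ s, ‖(w i : ℝ) • ee i - lp.single 2 i (x i)‖ ≤ ∑ _i ∈ s, c :=
          Finset.sum_le_sum this
      _ = s.card * c := by rw [Finset.sum_const, nsmul_eq_mul]
  have hcard : (s.card : ℝ) * c < δ / 2 := by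
    rw [hc]
    have h1 : (0:ℝ) < 2 * ((s.card : ℝ) + 1) := by positivity
    rw [mul_div_assoc'] at *
    rw [div_lt_div_iff₀ h1 (by norm_num : (0:ℝ) < 2)]
    nlinarith [Nat.cast_nonneg (α := ℝ) s.card]
  calc ‖toE w - x‖ ≤ ‖toE w - ∑ i ∈ s, lp.single 2 i (x i)‖
        + ‖(∑ i ∈ s, lp.single 2 i (x i)) - x‖ := by
        have := norm_sub_le_norm_sub_add_norm_sub (toE w) (∑ i ∈ s, lp.single 2 i (x i)) x
        exact this
    _ < δ / 2 + δ / 2 := by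
        rw [dist_eq_norm] at hs2
        exact add_lt_add_of_le_of_lt (key.trans hcard.le) hs2
    _ = δ := by ring

def lref (v : E) : E ≃ₗᵢ[ℝ] E := Submodule.reflection ((ℝ ∙ v)ᗮ)
lemma lref_apply (v x : E) : lref v x = x - ((2 * ⟪v, x⟫) / ‖v‖ ^ 2) • v := by
  rw [lref, Submodule.reflection_orthogonal_apply, Submodule.reflection_singleton_apply]
  simp only [RCLike.ofReal_real_eq_id, id_eq]
  module

def aref (v : E) (q : ℝ) : E ≃ᵃⁱ[ℝ] E :=
  ((AffineIsometryEquiv.constVAdd ℝ E (-((q / ‖v‖ ^ 2) • v))).trans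
    (lref v).toAffineIsometryEquiv).trans
    (AffineIsometryEquiv.constVAdd ℝ E ((q / ‖v‖ ^ 2) • v))

lemma aref_apply' (v : E) (q : ℝ) (x : E) :
    aref v q x = ((q / ‖v‖ ^ 2) • v) + lref v (x - (q / ‖v‖ ^ 2) • v) := by
  simp [aref, AffineIsometryEquiv.coe_constVAdd,
    LinearIsometryEquiv.coe_toAffineIsometryEquiv, vadd_eq_add, neg_add_eq_sub]

lemma aref_aref (v : E) (q : ℝ) (x : E) : aref v q (aref v q x) = x := by
  rw [aref_apply', aref_apply', add_sub_cancel_left, lref]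
  rw [Submodule.reflection_reflection]
  abel

lemma aref_apply (v : E) (q : ℝ) (hv : v ≠ 0) (x : E) :
    aref v q x = x + ((2 * (q - ⟪v, x⟫)) / ‖v‖ ^ 2) • v := by
  have hv2 : ‖v‖ ^ 2 ≠ 0 := pow_ne_zero 2 (norm_ne_zero_iff.mpr hv)
  rw [aref_apply', lref_apply, inner_sub_right, real_inner_smul_right,
    real_inner_self_eq_norm_sq]
  rw [show ⟪v, x⟫ - q / ‖v‖ ^ 2 * ‖v‖ ^ 2 = ⟪v, x⟫ - q by field_simp]
  module

lemma aref_fix (v : E) (q : ℝ) (hv : v ≠ 0) (x : E) (h : ⟪v, x⟫ = q) : aref v q x = x := by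
  rw [aref_apply v q hv, h]; simp



def Idx : Type := {p : (ℕ →₀ ℚ) × ℚ × ℕ // p.1 ≠ 0}

instance : Countable Idx := Subtype.countable
instance : Nonempty Idx := ⟨⟨(Finsupp.single 0 1, 0, 0), by simp [Finsupp.single_eq_zero]⟩⟩

section data
variable (f : ℕ → Idx)

def wF (n : ℕ) : ℕ →₀ ℚ := (f n).1.1
def mF (n : ℕ) : ℕ := (f n).1.2.2
def kF (n : ℕ) : ℕ := (Finset.range (n+1)).sup (fun j => (wF f j).support.sup id) + n + 1
def dF (n : ℕ) : ℝ := ‖toE (wF f n)‖ / 2 ^ (mF f n)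
def vF (n : ℕ) : E := toE (wF f n) + dF f n • ee (kF f n)
def qF (n : ℕ) : ℝ := ((f n).1.2.1 : ℝ)

lemma kF_strictMono : StrictMono (kF f) := by
  apply strictMono_nat_of_lt_succ
  intro n
  have : (Finset.range (n+1)).sup (fun j => (wF f j).support.sup id) ≤
      (Finset.range (n+1+1)).sup (fun j => (wF f j).support.sup id) :=
    Finset.sup_mono (Finset.range_subset_range.mpr (by omega))
  simp only [kF]; omega

lemma wF_kF_eq_zero {j n : ℕ} (h : j ≤ n) : (wF f j) (kF f n) = 0 := by
  by_contra hne
  have hmem : kF f n ∈ (wF f j).support := Finsupp.mem_support_iff.mpr hne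
  have h1 : kF f n ≤ (wF f j).support.sup id := Finset.le_sup (f := id) hmem
  have h2 : (wF f j).support.sup id ≤
      (Finset.range (n+1)).sup (fun j => (wF f j).support.sup id) :=
    Finset.le_sup (f := fun j => (wF f j).support.sup id) (Finset.mem_range.mpr (by omega))
  simp only [kF] at h1
  omega

lemma dF_pos (n : ℕ) : 0 < dF f n := by
  have : toE (wF f n) ≠ 0 := toE_ne_zero (f n).2
  have : 0 < ‖toE (wF f n)‖ := norm_pos_iff.mpr this
  exact div_pos this (by positivity)

lemma inner_vF_ee (j n : ℕ) :
    ⟪vF f j, ee (kF f n)⟫ = ((wF f j) (kF f n) : ℝ)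
      + dF f j * (if kF f j = kF f n then 1 else 0) := by
  rw [vF, inner_add_left, real_inner_smul_left, inner_toE_ee, inner_ee_ee]

lemma inner_vF_ee_of_lt {j n : ℕ} (h : j < n) : ⟪vF f j, ee (kF f n)⟫ = 0 := by
  rw [inner_vF_ee, wF_kF_eq_zero f h.le,
    if_neg (fun hh => absurd ((kF_strictMono f).injective hh) (by omega))]
  simp

lemma inner_vF_ee_self (n : ℕ) : ⟪vF f n, ee (kF f n)⟫ = dF f n := by
  rw [inner_vF_ee, wF_kF_eq_zero f le_rfl, if_pos rfl]
  simp

lemma vF_ne_zero (n : ℕ) : vF f n ≠ 0 := by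
  intro h
  have := inner_vF_ee_self f n
  rw [h, inner_zero_left] at this
  exact absurd this.symm (ne_of_gt (dF_pos f n))

lemma vF_dense (hf : Function.Surjective f) (v₀ : E) (q₀ : ℝ) (δ : ℝ) (hv₀ : v₀ ≠ 0)
    (hδ : 0 < δ) : ∃ n, ‖vF f n - v₀‖ < δ ∧ |qF f n - q₀| < δ := by
  set c : ℝ := min (δ/4) (‖v₀‖/2) with hc
  have hcpos : 0 < c := lt_min (by positivity) (div_pos (norm_pos_iff.mpr hv₀) two_pos)
  obtain ⟨w', hw'⟩ := dens_toE v₀ c hcpos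
  have hw'ne : w' ≠ 0 := by
    rintro rfl
    have h0 : toE (0 : ℕ →₀ ℚ) = 0 := by
      simp [toE]
    rw [h0, zero_sub, norm_neg] at hw'
    have : c ≤ ‖v₀‖ := (min_le_right _ _).trans (by linarith [norm_nonneg v₀])
    linarith
  obtain ⟨m', hm'⟩ : ∃ m' : ℕ, ‖toE w'‖ * (2/δ) < 2 ^ m' :=
    pow_unbounded_of_one_lt _ one_lt_two
  have hdm : ‖toE w'‖ / 2 ^ m' < δ / 2 := by
    rw [div_lt_div_iff₀ (by positivity) (by norm_num)]
    have h2 : (0:ℝ) < 2/δ := by positivity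
    calc ‖toE w'‖ * 2 = (‖toE w'‖ * (2/δ)) * δ := by field_simp
      _ < 2 ^ m' * δ := by
          exact mul_lt_mul_of_pos_right hm' hδ
      _ = δ * 2 ^ m' := by ring
  obtain ⟨q', hq'⟩ := exists_rat_near q₀ hδ
  obtain ⟨n, hn⟩ := hf ⟨(w', q', m'), hw'ne⟩
  refine ⟨n, ?_, ?_⟩
  · have hwn : wF f n = w' := by rw [wF, hn]
    have hmn : mF f n = m' := by rw [mF, hn]
    have hd : dF f n = ‖toE w'‖ / 2 ^ m' := by rw [dF, hwn, hmn]
    have : ‖vF f n - v₀‖ ≤ ‖toE w' - v₀‖ + ‖toE w'‖ / 2 ^ m' := by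
      rw [vF, hwn, hd, add_sub_right_comm]
      refine (norm_add_le _ _).trans ?_
      rw [norm_smul, norm_ee, mul_one, Real.norm_eq_abs,
        abs_of_nonneg (by positivity)]
    have hc4 : c ≤ δ/4 := min_le_left _ _
    linarith
  · have : qF f n = (q' : ℝ) := by rw [qF, hn]
    rw [this, show ((q':ℝ) - q₀) = -(q₀ - q') by ring, abs_neg]
    exact hq'

end data

section solve
variable (v : ℕ → E) (q : ℕ → ℝ) (k : ℕ → ℕ) (d : ℕ → ℝ)
  (h0 : ∀ j n, j < n → ⟪v j, ee (k n)⟫ = 0)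
  (h1 : ∀ n, ⟪v n, ee (k n)⟫ = d n) (h2 : ∀ n, 0 < d n)

include h0 h1 h2 in
lemma solve : ∀ N, ∃ x : E, ∀ j < N, ⟪v j, x⟫ = q j := by
  intro N
  induction N with
  | zero => exact ⟨0, fun j hj => absurd hj (by omega)⟩
  | succ N ih =>
    obtain ⟨x', hx'⟩ := ih
    refine ⟨x' + ((q N - ⟪v N, x'⟫) / d N) • ee (k N), fun j hj => ?_⟩
    rw [inner_add_right, real_inner_smul_right]
    rcases Nat.lt_or_ge j N with h | h
    · rw [h0 j N h, mul_zero, add_zero, hx' j h]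
    · have hjN : j = N := by omega
      subst hjN
      rw [h1 j, div_mul_cancel₀ _ (ne_of_gt (h2 j))]
      ring
end solve

lemma reflect_close (v : ℕ → E) (q : ℕ → ℝ) (hvne : ∀ n, v n ≠ 0)
    (hdense : ∀ (v₀ : E) (q₀ δ : ℝ), v₀ ≠ 0 → 0 < δ → ∃ n, ‖v n - v₀‖ < δ ∧ |q n - q₀| < δ)
    (x y : E) (hxy : x ≠ y) (ε : ℝ) (hε : 0 < ε) :
    ∃ n, ‖aref (v n) (q n) x - y‖ < ε := by
  set v₀ : E := (2:ℝ)⁻¹ • (y - x) with hv₀def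
  have hv₀ : v₀ ≠ 0 := smul_ne_zero (by norm_num) (sub_ne_zero.mpr (Ne.symm hxy))
  set q₀ : ℝ := ⟪v₀, x⟫ + ‖v₀‖ ^ 2 with hq₀def
  set F : E × ℝ → E := fun p => x + ((2 * (p.2 - ⟪p.1, x⟫)) / ‖p.1‖ ^ 2) • p.1 with hFdef
  have hden : (‖v₀‖ : ℝ) ^ 2 ≠ 0 := pow_ne_zero 2 (norm_ne_zero_iff.mpr hv₀)
  have hcont : ContinuousAt F (v₀, q₀) := by
    apply ContinuousAt.add continuousAt_const
    apply ContinuousAt.fun_smul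
    · apply ContinuousAt.div
      · exact (continuousAt_const.mul (continuousAt_snd.sub
          ((continuous_fst.inner continuous_const).continuousAt)))
      · exact ((continuous_fst.norm.pow 2).continuousAt)
      · exact hden
    · exact continuousAt_fst
  have hFval : F (v₀, q₀) = y := by
    have : q₀ - ⟪v₀, x⟫ = ‖v₀‖ ^ 2 := by rw [hq₀def]; ring
    rw [hFdef]
    simp only
    rw [this, mul_div_assoc, div_self hden, mul_one]
    rw [hv₀def, smul_smul]
    norm_num
  have := Metric.tendsto_nhds_nhds.mp (hcont.tendsto.mono_left le_rfl)
  rw [hFval] at this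
  obtain ⟨δ, hδpos, hδ⟩ := this ε hε
  obtain ⟨n, hn1, hn2⟩ := hdense v₀ q₀ δ hv₀ hδpos
  refine ⟨n, ?_⟩
  have hdist : dist ((v n, q n) : E × ℝ) (v₀, q₀) < δ := by
    rw [Prod.dist_eq]
    exact max_lt (by rwa [dist_eq_norm]) (by rwa [Real.dist_eq])
  have := hδ hdist
  rw [dist_eq_norm] at this
  rw [aref_apply _ _ (hvne n)]
  exact this


set_option maxHeartbeats 1000000 in
lemma exists_R : ∃ R : ℕ → (E ≃ᵃⁱ[ℝ] E),
    (∀ n, R n * R n = 1) ∧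
    (∀ (x y : E) (ε : ℝ), 0 < ε → x ≠ y → ∃ n, ‖R n x - y‖ < ε) ∧
    (∀ N : ℕ, ∃ x : E, ∀ j < N, R j x = x) := by
  obtain ⟨f, hf⟩ := exists_surjective_nat Idx
  refine ⟨fun n => aref (vF f n) (qF f n), ?_, ?_, ?_⟩
  · intro n
    apply AffineIsometryEquiv.ext
    intro x
    exact aref_aref (vF f n) (qF f n) x
  · intro x y ε hε hxy
    exact reflect_close (vF f) (qF f) (vF_ne_zero f)
      (fun v₀ q₀ δ h1 h2 => vF_dense f hf v₀ q₀ δ h1 h2) x y hxy ε hε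
  · intro N
    obtain ⟨x, hx⟩ := solve (vF f) (qF f) (kF f) (dF f)
      (fun j n h => inner_vF_ee_of_lt f h) (inner_vF_ee_self f) (dF_pos f) N
    exact ⟨x, fun j hj => aref_fix (vF f j) (qF f j) (vF_ne_zero f j) x (hx j hj)⟩


/-- There is a countable group with an affine isometric action on
`ℓ²(ℕ, ℝ)` having dense orbits, such that every finitely generated subgroup has a fixed
point (so the action almost has fixed points). -/




theorem exists_countable_group_minimal_action_almost_fixed_points :
    ∃ (Γ : Type) (inst : Group Γ), @HasMinimalActionWithAlmostFixedPoints Γ inst := by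
  classical
  obtain ⟨R, hRR, hdense, hfix⟩ := exists_R
  set Γs : Subgroup (E ≃ᵃⁱ[ℝ] E) := Subgroup.closure (Set.range R) with hΓs
  have hmemprod : ∀ l : List ℕ, (l.map R).prod ∈ Γs := by
    intro l
    refine Subgroup.list_prod_mem (K := Γs) ?_
    intro g hg
    obtain ⟨n, _, rfl⟩ := List.mem_map.mp hg
    exact Subgroup.subset_closure ⟨n, rfl⟩
  have key : ∀ S : Subgroup ↥Γs, (∃ F : Finset ↥Γs, Subgroup.closure (F : Set ↥Γs) = S) →
      ∃ v : E, ∀ h ∈ S, (h : E ≃ᵃⁱ[ℝ] E) v = v := by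
    rintro S ⟨F, hF⟩
    have hcup : Set.range R = ⋃ N : ℕ, R '' Set.Iio N := by
      ext g
      simp only [Set.mem_range, Set.mem_iUnion, Set.mem_image, Set.mem_Iio]
      exact ⟨fun ⟨n, hn⟩ => ⟨n + 1, n, by omega, hn⟩, fun ⟨N, n, _, hn⟩ => ⟨n, hn⟩⟩
    have hmono : Monotone fun N : ℕ => Subgroup.closure (R '' Set.Iio N) :=
      fun a b hab => Subgroup.closure_mono (Set.image_mono (Set.Iio_subset_Iio hab))
    have hiSup : Γs = ⨆ N : ℕ, Subgroup.closure (R '' Set.Iio N) := by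
      rw [hΓs, hcup, Subgroup.closure_iUnion]
    have hNg : ∀ g : {g : ↥Γs // g ∈ F}, ∃ N : ℕ,
        (g : E ≃ᵃⁱ[ℝ] E) ∈ Subgroup.closure (R '' Set.Iio N) := by
      rintro ⟨⟨g, hg⟩, _⟩
      rw [hiSup] at hg
      exact (Subgroup.mem_iSup_of_directed (hmono.directed_le)).mp hg
    choose Nf hNf using hNg
    set N₀ : ℕ := F.attach.sup Nf with hN₀
    obtain ⟨x, hx⟩ := hfix N₀
    set St : Subgroup (E ≃ᵃⁱ[ℝ] E) :=
      { carrier := {g : E ≃ᵃⁱ[ℝ] E | g x = x}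
        one_mem' := rfl
        mul_mem' := fun {a b} ha hb => by
          simp only [Set.mem_setOf_eq] at *
          show (a * b) x = x
          rw [AffineIsometryEquiv.coe_mul, Function.comp_apply, hb, ha]
        inv_mem' := fun {a} ha => by
          simp only [Set.mem_setOf_eq] at *
          show a⁻¹ x = x
          conv_lhs => rw [← ha]
          exact a.symm_apply_apply x } with hSt
    have hclosSt : ∀ N ≤ N₀, Subgroup.closure (R '' Set.Iio N) ≤ St := by
      intro N hN
      rw [Subgroup.closure_le]
      rintro g ⟨j, hj, rfl⟩
      exact hx j (lt_of_lt_of_le hj hN)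
    have hFSt : ∀ g ∈ F, (((g : ↥Γs) : E ≃ᵃⁱ[ℝ] E)) ∈ St := by
      intro g hg
      exact hclosSt _ (Finset.le_sup (Finset.mem_attach _ ⟨g, hg⟩)) (hNf ⟨g, hg⟩)
    refine ⟨x, ?_⟩
    intro h hh
    have hle : S ≤ St.comap Γs.subtype := by
      rw [← hF, Subgroup.closure_le]
      intro g hg
      exact hFSt g hg
    exact hle hh
  refine ⟨Γs, inferInstance, ?_, fun g => (g : E ≃ᵃⁱ[ℝ] E), ?_, ?_, key, ?_⟩
  · -- countable
    have hsurj : Function.Surjective (fun l : List ℕ => (⟨(l.map R).prod, hmemprod l⟩ : Γs)) := by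
      rintro ⟨g, hg⟩
      have : ∃ l : List ℕ, (l.map R).prod = g := by
        refine Subgroup.closure_induction ?_ ?_ ?_ ?_ hg
        · rintro x ⟨n, rfl⟩; exact ⟨[n], by simp⟩
        · exact ⟨[], by simp⟩
        · rintro x y hx hy ⟨l₁, rfl⟩ ⟨l₂, rfl⟩
          exact ⟨l₁ ++ l₂, by simp⟩
        · rintro x hx ⟨l, rfl⟩
          refine ⟨l.reverse, ?_⟩
          rw [List.prod_inv_reverse]
          rw [List.map_reverse, List.map_map]
          apply congrArg List.prod
          apply congrArg List.reverse
          apply List.map_congr_left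
          intro n _
          simp only [Function.comp_apply]
          exact (inv_eq_of_mul_eq_one_left (hRR n)).symm
      obtain ⟨l, hl⟩ := this
      exact ⟨l, Subtype.ext hl⟩
    exact hsurj.countable
  · -- hom
    intro g h x; rfl
  · -- dense orbits
    intro x₀
    rw [Metric.dense_iff]
    intro y r hr
    by_cases hxy : x₀ = y
    · exact ⟨x₀, Metric.mem_ball.mpr (by simp [hxy, hr]), ⟨1, rfl⟩⟩
    · obtain ⟨n, hn⟩ := hdense x₀ y r hr hxy
      refine ⟨R n x₀, Metric.mem_ball.mpr (by rwa [dist_eq_norm]), ?_⟩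
      exact ⟨⟨R n, Subgroup.subset_closure ⟨n, rfl⟩⟩, rfl⟩
  · -- almost fixed points
    intro ε hε F
    obtain ⟨v, hv⟩ := key (Subgroup.closure (F : Set ↥Γs)) ⟨F, rfl⟩
    refine ⟨v, fun g hg => ?_⟩
    rw [hv g (Subgroup.subset_closure hg), sub_self, norm_zero]
    exact hε.le


end
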